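/- arXiv:2006.02936 — 2 statements merged into one kernel-verified Lean document; each statement's English description precedes it below -/
import Mathlib

section
/- Define R0 = Πβk1/(μ1 μ2 μ3). If R0 > 1, then the triple H1 = Π/(μ1 R0), I1 = μ1 μ3 (R0 − 1)/(β k1), V1 = μ1 (R0 − 1)/β consists of strictly positive real numbers and satisfies the equilibrium equations Π − βH1V1 − μ1 H1 = 0, βH1V1 − μ2 I1 = 0, and k1 I1 − μ3 V1 = 0. -/
/- At the equilibrium the healthy-cell level is pinned by the last two equations alone:
`H1 = Π / (μ1 R0) = μ2 μ3 / (β k1)`, exactly the level at which an infected cell replaces itself.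
With this value of `H1` the second and third equations are linear identities in `I1` and `V1`,
and the first reduces to `β V1 / μ1 + 1 = R0`. -/

theorem div_mul_basicReproductionNumber {Pi beta k1 mu1 mu2 mu3 : ℝ}
    (hPi : Pi ≠ 0) (hbeta : beta ≠ 0) (hk1 : k1 ≠ 0) (hmu1 : mu1 ≠ 0) (hmu2 : mu2 ≠ 0)
    (hmu3 : mu3 ≠ 0) :
    Pi / (mu1 * (Pi * beta * k1 / (mu1 * mu2 * mu3))) = mu2 * mu3 / (beta * k1) := by
  field_simp

/-- Existence of the immune-free virus-persistence equilibrium E1 when R0 > 1. -/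
theorem E1_exists (Pi beta k1 mu1 mu2 mu3 : ℝ)
    (hPi : 0 < Pi) (hbeta : 0 < beta) (hk1 : 0 < k1)
    (hmu1 : 0 < mu1) (hmu2 : 0 < mu2) (hmu3 : 0 < mu3)
    (R0 H1 I1 V1 : ℝ)
    (hR0 : R0 = Pi * beta * k1 / (mu1 * mu2 * mu3))
    (hR0gt : 1 < R0)
    (hH1 : H1 = Pi / (mu1 * R0))
    (hI1 : I1 = mu1 * mu3 * (R0 - 1) / (beta * k1))
    (hV1 : V1 = mu1 * (R0 - 1) / beta) :
    0 < H1 ∧ 0 < I1 ∧ 0 < V1 ∧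
    Pi - beta * H1 * V1 - mu1 * H1 = 0 ∧
    beta * H1 * V1 - mu2 * I1 = 0 ∧
    k1 * I1 - mu3 * V1 = 0 := by
  have hR0pos : 0 < R0 := one_pos.trans hR0gt
  have hR0sub : 0 < R0 - 1 := sub_pos.mpr hR0gt
  have hH1' : H1 = mu2 * mu3 / (beta * k1) := by
    rw [hH1, hR0]
    exact div_mul_basicReproductionNumber hPi.ne' hbeta.ne' hk1.ne' hmu1.ne' hmu2.ne' hmu3.ne'
  have hmuH1 : mu1 * H1 * R0 = Pi := by
    rw [hH1]
    field_simp
  refine ⟨hH1 ▸ by positivity, hI1 ▸ by positivity, hV1 ▸ by positivity, ?_, ?_, ?_⟩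
  · rw [← hmuH1, hV1]
    field_simp
    ring
  · rw [hH1', hI1, hV1]
    field_simp
    ring
  · rw [hI1, hV1]
    field_simp
    ring
end

section
/- For R0 < 1 (with R0 = Πβk1/(μ1μ2μ3)), every eigenvalue of the Jacobian of the within-host model at the disease-free equilibrium has strictly negative real part; hence the disease-free equilibrium is locally asymptotically stable. -/
set_option maxRecDepth 10000
set_option maxHeartbeats 2000000
open Matrix Polynomial Complex

lemma m8_0 {α : Type*} (a0 a1 a2 a3 a4 a5 a6 a7 : α) (h : 0 < 8) :
    ![a0,a1,a2,a3,a4,a5,a6,a7] ⟨0, h⟩ = a0 := rfl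
lemma m8_1 {α : Type*} (a0 a1 a2 a3 a4 a5 a6 a7 : α) (h : 1 < 8) :
    ![a0,a1,a2,a3,a4,a5,a6,a7] ⟨1, h⟩ = a1 := rfl
lemma m8_2 {α : Type*} (a0 a1 a2 a3 a4 a5 a6 a7 : α) (h : 2 < 8) :
    ![a0,a1,a2,a3,a4,a5,a6,a7] ⟨2, h⟩ = a2 := rfl
lemma m8_3 {α : Type*} (a0 a1 a2 a3 a4 a5 a6 a7 : α) (h : 3 < 8) :
    ![a0,a1,a2,a3,a4,a5,a6,a7] ⟨3, h⟩ = a3 := rfl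
lemma m8_4 {α : Type*} (a0 a1 a2 a3 a4 a5 a6 a7 : α) (h : 4 < 8) :
    ![a0,a1,a2,a3,a4,a5,a6,a7] ⟨4, h⟩ = a4 := rfl
lemma m8_5 {α : Type*} (a0 a1 a2 a3 a4 a5 a6 a7 : α) (h : 5 < 8) :
    ![a0,a1,a2,a3,a4,a5,a6,a7] ⟨5, h⟩ = a5 := rfl
lemma m8_6 {α : Type*} (a0 a1 a2 a3 a4 a5 a6 a7 : α) (h : 6 < 8) :
    ![a0,a1,a2,a3,a4,a5,a6,a7] ⟨6, h⟩ = a6 := rfl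
lemma m8_7 {α : Type*} (a0 a1 a2 a3 a4 a5 a6 a7 : α) (h : 7 < 8) :
    ![a0,a1,a2,a3,a4,a5,a6,a7] ⟨7, h⟩ = a7 := rfl
lemma v8_0 {α : Type*} (a0 a1 a2 a3 a4 a5 a6 a7 : α) :
    ![a0,a1,a2,a3,a4,a5,a6,a7] (0 : Fin 8) = a0 := rfl
lemma v8_1 {α : Type*} (a0 a1 a2 a3 a4 a5 a6 a7 : α) :
    ![a0,a1,a2,a3,a4,a5,a6,a7] (1 : Fin 8) = a1 := rfl
lemma v8_2 {α : Type*} (a0 a1 a2 a3 a4 a5 a6 a7 : α) :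
    ![a0,a1,a2,a3,a4,a5,a6,a7] (2 : Fin 8) = a2 := rfl
lemma v8_3 {α : Type*} (a0 a1 a2 a3 a4 a5 a6 a7 : α) :
    ![a0,a1,a2,a3,a4,a5,a6,a7] (3 : Fin 8) = a3 := rfl
lemma v8_4 {α : Type*} (a0 a1 a2 a3 a4 a5 a6 a7 : α) :
    ![a0,a1,a2,a3,a4,a5,a6,a7] (4 : Fin 8) = a4 := rfl
lemma v8_5 {α : Type*} (a0 a1 a2 a3 a4 a5 a6 a7 : α) :
    ![a0,a1,a2,a3,a4,a5,a6,a7] (5 : Fin 8) = a5 := rfl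
lemma v8_6 {α : Type*} (a0 a1 a2 a3 a4 a5 a6 a7 : α) :
    ![a0,a1,a2,a3,a4,a5,a6,a7] (6 : Fin 8) = a6 := rfl
lemma v8_7 {α : Type*} (a0 a1 a2 a3 a4 a5 a6 a7 : α) :
    ![a0,a1,a2,a3,a4,a5,a6,a7] (7 : Fin 8) = a7 := rfl

lemma aux_charpoly_root_exists_kernel {n : Type*} [Fintype n] [DecidableEq n]
    {K : Type*} [Field K] (M : Matrix n n K) (r : K) (h : M.charpoly.IsRoot r) :
    ∃ v ≠ 0, ((Matrix.charmatrix M).map (Polynomial.eval r)).mulVec v = 0 := by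
  apply Matrix.exists_mulVec_eq_zero_iff.2
  have h2 := RingHom.map_det (Polynomial.evalRingHom r) (Matrix.charmatrix M)
  rw [RingHom.mapMatrix_apply] at h2
  have h3 : (Polynomial.evalRingHom r) (Matrix.charmatrix M).det = 0 := h
  rw [h2] at h3
  exact h3




/-- For R0 < 1, every (complex) eigenvalue of the Jacobian at the disease-free
equilibrium has strictly negative real part: the DFE is locally asymptotically stable. -/
theorem DFE_locally_stable
    (Pi beta k1 k2 r eta mu1 mu2 mu3 mu4 mu5 mu6 mu7 mu8 R0 : ℝ)
    (hPi : 0 < Pi) (hbeta : 0 < beta) (hk1 : 0 < k1) (hk2 : 0 < k2)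
    (hr : 0 < r) (heta : 0 < eta)
    (hmu1 : 0 < mu1) (hmu2 : 0 < mu2) (hmu3 : 0 < mu3) (hmu4 : 0 < mu4)
    (hmu5 : 0 < mu5) (hmu6 : 0 < mu6) (hmu7 : 0 < mu7) (hmu8 : 0 < mu8)
    (hR0 : R0 = Pi * beta * k1 / (mu1 * mu2 * mu3)) (hR0lt : R0 < 1)
    (J : Matrix (Fin 8) (Fin 8) ℝ)
    (hJ : J = !![-mu1, 0, -beta * Pi / mu1, 0, 0, 0, 0, 0;
                 0, -mu2, beta * Pi / mu1, 0, 0, 0, 0, 0;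
                 0, k1, -mu3, 0, 0, 0, 0, 0;
                 0, k2, 0, -mu4, 0, 0, 0, 0;
                 0, 0, 0, r, -mu5, 0, 0, 0;
                 0, 0, 0, 0, 0, -mu6, 0, 0;
                 0, 0, 0, 0, 0, 0, -mu7, 0;
                 0, 0, 0, 0, 0, 0, eta, -mu8]) :
    ∀ z : ℂ, (J.map (algebraMap ℝ ℂ)).charpoly.IsRoot z → z.re < 0 := by
  intro z hz
  by_contra hre
  push_neg at hre
  -- z + μ ≠ 0 for positive μ
  have hne : ∀ m : ℝ, 0 < m → z + (m : ℂ) ≠ 0 := by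
    intro m hm h
    have : (z + (m : ℂ)).re = 0 := by rw [h]; simp
    simp [Complex.add_re] at this
    linarith
  subst hJ
  obtain ⟨v, hv0, hv⟩ := aux_charpoly_root_exists_kernel _ z hz
  have hmat : (Matrix.charmatrix ((!![-mu1, 0, -beta * Pi / mu1, 0, 0, 0, 0, 0;
                 0, -mu2, beta * Pi / mu1, 0, 0, 0, 0, 0;
                 0, k1, -mu3, 0, 0, 0, 0, 0;
                 0, k2, 0, -mu4, 0, 0, 0, 0;
                 0, 0, 0, r, -mu5, 0, 0, 0;
                 0, 0, 0, 0, 0, -mu6, 0, 0;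
                 0, 0, 0, 0, 0, 0, -mu7, 0;
                 0, 0, 0, 0, 0, 0, eta, -mu8] : Matrix (Fin 8) (Fin 8) ℝ).map
                 (algebraMap ℝ ℂ))).map (Polynomial.eval z) =
      !![z + mu1, 0, (beta * Pi / mu1 : ℝ), 0, 0, 0, 0, 0;
         0, z + mu2, -(beta * Pi / mu1 : ℝ), 0, 0, 0, 0, 0;
         0, -(k1:ℝ), z + mu3, 0, 0, 0, 0, 0;
         0, -(k2:ℝ), 0, z + mu4, 0, 0, 0, 0;
         0, 0, 0, -(r:ℝ), z + mu5, 0, 0, 0;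
         0, 0, 0, 0, 0, z + mu6, 0, 0;
         0, 0, 0, 0, 0, 0, z + mu7, 0;
         0, 0, 0, 0, 0, 0, -(eta:ℝ), z + mu8] := by
    ext i j
    fin_cases i <;> fin_cases j <;>
      simp only [Matrix.charmatrix_apply, Matrix.diagonal_apply, Matrix.map_apply,
        Matrix.of_apply, m8_0, m8_1, m8_2, m8_3, m8_4, m8_5, m8_6, m8_7,
        v8_0, v8_1, v8_2, v8_3, v8_4, v8_5, v8_6, v8_7, Fin.mk.injEq,
        Polynomial.eval_sub, Polynomial.eval_neg, Polynomial.eval_X, Polynomial.eval_C,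
        Polynomial.eval_zero, map_neg, map_zero, Complex.coe_algebraMap, reduceIte] <;>
      norm_num <;> push_cast <;> ring
  rw [hmat] at hv
  have e0 := congrFun hv 0
  have e1 := congrFun hv 1
  have e2 := congrFun hv 2
  have e3 := congrFun hv 3
  have e4 := congrFun hv 4
  have e5 := congrFun hv 5
  have e6 := congrFun hv 6
  have e7 := congrFun hv 7
  simp only [Matrix.mulVec, dotProduct, Fin.sum_univ_eight, Matrix.of_apply,
    v8_0, v8_1, v8_2, v8_3, v8_4, v8_5, v8_6, v8_7,
    _root_.Pi.zero_apply, zero_mul, add_zero, zero_add, mul_zero,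
    neg_mul, Complex.ofReal_neg] at e0 e1 e2 e3 e4 e5 e6 e7
  -- quadratic factor is nonzero
  have hq : (z + (mu2:ℂ)) * (z + (mu3:ℂ)) ≠ ((k1 : ℂ) * (beta * Pi / mu1 : ℝ)) := by
    intro h
    have hre' := congrArg Complex.re h
    have him := congrArg Complex.im h
    simp [Complex.mul_re, Complex.mul_im, Complex.add_re, Complex.add_im] at hre' him
    have hq1 : Pi * beta * k1 < mu1 * mu2 * mu3 := by
      rw [hR0] at hR0lt
      have h3 : 0 < mu1 * mu2 * mu3 := by positivity
      calc Pi * beta * k1 = Pi * beta * k1 / (mu1*mu2*mu3) * (mu1*mu2*mu3) := by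
            field_simp
        _ < 1 * (mu1*mu2*mu3) := by exact mul_lt_mul_of_pos_right hR0lt h3
        _ = mu1*mu2*mu3 := by ring
    have hqlt : k1 * (beta * Pi / mu1) < mu2 * mu3 := by
      have he : k1 * (beta * Pi / mu1) = Pi * beta * k1 / mu1 := by ring
      rw [he, div_lt_iff₀ hmu1]
      nlinarith [hq1]
    -- im : z.im * (z.re + mu3) + (z.re + mu2) * z.im = 0
    have him' : z.im * (2 * z.re + mu2 + mu3) = 0 := by nlinarith [him]
    have hy : z.im = 0 := by
      rcases mul_eq_zero.1 him' with h' | h'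
      · exact h'
      · linarith
    rw [hy] at hre'
    nlinarith [hre']
  -- cascade: all components vanish
  have hv2 : v 2 = 0 := by
    have key : ((z + (mu2:ℂ)) * (z + (mu3:ℂ)) - (k1 : ℂ) * (beta * Pi / mu1 : ℝ)) * v 2 = 0 := by
      have h1 : (z + (mu2:ℂ)) * v 1 = (beta * Pi / mu1 : ℝ) * v 2 := by
        linear_combination e1
      have h2 : (z + (mu3:ℂ)) * v 2 = (k1 : ℂ) * v 1 := by
        linear_combination e2
      linear_combination (z + (mu2:ℂ)) * h2 + (k1:ℂ) * h1
    rcases mul_eq_zero.1 key with h | h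
    · exact absurd (sub_eq_zero.1 h) hq
    · exact h
  have hv1 : v 1 = 0 := by
    have : (z + (mu2:ℂ)) * v 1 = 0 := by rw [hv2] at e1; linear_combination e1
    exact (mul_eq_zero.1 this).resolve_left (hne mu2 hmu2)
  have hv0' : v 0 = 0 := by
    have : (z + (mu1:ℂ)) * v 0 = 0 := by rw [hv2] at e0; linear_combination e0
    exact ((mul_eq_zero.1 this).resolve_left (hne mu1 hmu1))
  have hv3 : v 3 = 0 := by
    have : (z + (mu4:ℂ)) * v 3 = 0 := by rw [hv1] at e3; linear_combination e3
    exact ((mul_eq_zero.1 this).resolve_left (hne mu4 hmu4))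
  have hv4 : v 4 = 0 := by
    have : (z + (mu5:ℂ)) * v 4 = 0 := by rw [hv3] at e4; linear_combination e4
    exact ((mul_eq_zero.1 this).resolve_left (hne mu5 hmu5))
  have hv5 : v 5 = 0 := by
    have : (z + (mu6:ℂ)) * v 5 = 0 := by linear_combination e5
    exact ((mul_eq_zero.1 this).resolve_left (hne mu6 hmu6))
  have hv6 : v 6 = 0 := by
    have : (z + (mu7:ℂ)) * v 6 = 0 := by linear_combination e6
    exact ((mul_eq_zero.1 this).resolve_left (hne mu7 hmu7))
  have hv7 : v 7 = 0 := by
    have : (z + (mu8:ℂ)) * v 7 = 0 := by rw [hv6] at e7; linear_combination e7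
    exact ((mul_eq_zero.1 this).resolve_left (hne mu8 hmu8))
  apply hv0
  funext i
  fin_cases i <;> assumption
end
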